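/- Let (G, T) be a Steiner Orientation instance with G = (V, E, A) mixed acyclic, and suppose T contains pairs (s_1,t_1), …, (s_m,t_m) with m ≥ 2, t_i = s_{i+1} for all 1 ≤ i < m, and t_m = s_1. Then (G, T) is a no-instance of Steiner Orientation. -/

import Mathlib

/-- A mixed graph `G = (V, E, A)`: a simple graph `E` of undirected edges together
with a set `A` of arcs (ordered pairs of distinct vertices). -/
structure MixedGraph (V : Type*) where
  E : SimpleGraph V
  A : V → V → Prop
  A_irrefl : ∀ v : V, ¬ A v v

namespace MixedGraph

variable {V : Type*}

/-- The underlying simple graph of a mixed graph. -/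
def underlying (G : MixedGraph V) : SimpleGraph V where
  Adj u v := G.E.Adj u v ∨ G.A u v ∨ G.A v u
  symm := by
    refine ⟨?_⟩
    intro u v h
    rcases h with h | h | h
    · exact Or.inl h.symm
    · exact Or.inr (Or.inr h)
    · exact Or.inr (Or.inl h)
  loopless := by
    refine ⟨?_⟩
    intro v h
    rcases h with h | h | h
    · exact G.E.ne_of_adj h rfl
    · exact G.A_irrefl v h
    · exact G.A_irrefl v h

/-- `G` contains a mixed cycle: a cyclic sequence of `p ≥ 2` pairwise distinct
vertices in which each consecutive pair (cyclically) is an undirected edge of `E`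
or an arc of `A`, and no edge of `E` is used by two different consecutive pairs.
(`useE i = true` means the `i`-th consecutive pair uses an edge of `E`.) -/
def HasMixedCycle (G : MixedGraph V) : Prop :=
  ∃ (p : ℕ) (c : Fin (p + 2) → V) (useE : Fin (p + 2) → Bool),
    Function.Injective c ∧
    (∀ i : Fin (p + 2),
      (useE i = true → G.E.Adj (c i) (c (i + 1))) ∧
      (useE i = false → G.A (c i) (c (i + 1)))) ∧
    (∀ i j : Fin (p + 2), i ≠ j → useE i = true → useE j = true →
      s(c i, c (i + 1)) ≠ s(c j, c (j + 1)))

/-- A mixed graph is mixed acyclic if it has no mixed cycle. -/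
def MixedAcyclic (G : MixedGraph V) : Prop := ¬ G.HasMixedCycle

/-- An orientation of the undirected edges of a mixed graph: each edge
`{u,v} ∈ E` is assigned exactly one of the two directions `(u,v)`, `(v,u)`. -/
structure Orientation (G : MixedGraph V) where
  dir : V → V → Prop
  dir_adj : ∀ u v : V, dir u v → G.E.Adj u v
  total : ∀ u v : V, G.E.Adj u v → dir u v ∨ dir v u
  antisymm : ∀ u v : V, dir u v → ¬ dir v u

/-- The arc relation of the digraph `G_λ`: the original arcs together with the
chosen orientations of the undirected edges. -/
def Orientation.arc {G : MixedGraph V} (lam : Orientation G) (u v : V) : Prop :=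
  G.A u v ∨ lam.dir u v

/-- The orientation `lam` satisfies the set `T` of terminal pairs if `G_λ`
contains a directed path from `s` to `t` for every `(s, t) ∈ T`. -/
def Orientation.Satisfies {G : MixedGraph V} (lam : Orientation G)
    (T : Set (V × V)) : Prop :=
  ∀ p ∈ T, Relation.ReflTransGen lam.arc p.1 p.2

/-- `(G, T)` is a yes-instance of Steiner Orientation: some orientation of the
undirected edges satisfies all terminal pairs. -/
def YesInstance (G : MixedGraph V) (T : Set (V × V)) : Prop :=
  ∃ lam : Orientation G, lam.Satisfies T

/-- The number of arcs of `G` having `v` as head or as tail. -/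
noncomputable def degA (G : MixedGraph V) (v : V) : ℕ :=
  {p : V × V | G.A p.1 p.2 ∧ (p.1 = v ∨ p.2 = v)}.ncard

end MixedGraph

/-!
An orientation satisfying all terminal pairs chains the directed paths `s₁ → t₁ = s₂ → ⋯ → t_m = s₁`
into a closed directed walk of positive length (each path is nontrivial since `sᵢ ≠ tᵢ`). Shortcutting
repeated vertices turns it into a directed cycle of `G_λ`. Such a cycle is a mixed cycle of `G`: an
edge of `E` cannot be traversed twice, since it is oriented in one direction only and the cycle
visits each vertex once.
-/

open Relation

theorem Relation.ReflTransGen.exists_nodup_isChain {α : Type*} {r : α → α → Prop} {a b : α}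
    (h : ReflTransGen r a b) :
    ∃ l : List α, List.IsChain r (a :: l) ∧ (a :: l).getLast (List.cons_ne_nil _ _) = b ∧
      (a :: l).Nodup := by
  induction h using Relation.ReflTransGen.head_induction_on with
  | refl => exact ⟨[], .singleton _, rfl, List.nodup_singleton _⟩
  | @head a c hac _ ih =>
    obtain ⟨l, hchain, hlast, hnodup⟩ := ih
    by_cases ha : a ∈ c :: l
    · obtain ⟨s, t, hst⟩ := List.append_of_mem ha
      simp only [hst] at hchain hlast hnodup
      exact ⟨t, hchain.right_of_append, by simpa using hlast, hnodup.of_append_right⟩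
    · exact ⟨c :: l, hchain.cons_cons hac, by simpa using hlast, List.nodup_cons.2 ⟨ha, hnodup⟩⟩

theorem Relation.TransGen.exists_injective_cycle {α : Type*} {r : α → α → Prop}
    (hirr : ∀ a, ¬ r a a) {a : α} (h : TransGen r a a) :
    ∃ (p : ℕ) (c : Fin (p + 2) → α), Function.Injective c ∧ ∀ i, r (c i) (c (i + 1)) := by
  obtain ⟨b, hab, hba⟩ := TransGen.tail'_iff.mp h
  obtain ⟨l, hchain, hlast, hnodup⟩ := hab.exists_nodup_isChain
  obtain _ | ⟨x, l⟩ := l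
  · simp only [List.getLast_singleton] at hlast
    exact (hirr a (hlast ▸ hba)).elim
  refine ⟨l.length, (a :: x :: l).get, List.nodup_iff_injective_get.mp hnodup, fun i => ?_⟩
  induction i using Fin.lastCases with
  | last =>
    rw [Fin.last_add_one]
    simpa [List.getLast_eq_getElem, ← hlast] using hba
  | cast i =>
    rw [Fin.coeSucc_eq_succ]
    exact hchain.getElem i (by simp [Nat.lt_succ_iff.mp i.isLt])

theorem Relation.transGen_of_cyclic_pairs {α : Type*} {r : α → α → Prop} {n : ℕ}
    (f : Fin (n + 1) → α × α) (hcyc : ∀ i, (f i).2 = (f (i + 1)).1)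
    (hf : ∀ i, TransGen r (f i).1 (f i).2) : TransGen r (f 0).1 (f 0).1 := by
  have hchain : ∀ i, TransGen r (f 0).1 (f i).2 := by
    intro i
    induction i using Fin.induction with
    | zero => exact hf 0
    | succ i ih => exact ih.trans (by simpa [hcyc, Fin.coeSucc_eq_succ] using hf i.succ)
  simpa [hcyc, Fin.last_add_one] using hchain (Fin.last n)

namespace MixedGraph

variable {V : Type*} {G : MixedGraph V}

theorem Orientation.arc_irrefl (lam : Orientation G) (v : V) : ¬ lam.arc v v
  | .inl h => G.A_irrefl v h
  | .inr h => G.E.loopless.irrefl v (lam.dir_adj v v h)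

open Classical in
theorem Orientation.hasMixedCycle_of_injective_cycle (lam : Orientation G) {p : ℕ}
    {c : Fin (p + 2) → V} (hinj : Function.Injective c) (hc : ∀ i, lam.arc (c i) (c (i + 1))) :
    G.HasMixedCycle := by
  refine ⟨p, c, fun i => !decide (G.A (c i) (c (i + 1))), hinj, fun i => ⟨fun hE => ?_, ?_⟩, ?_⟩
  · simp only [Bool.not_eq_eq_eq_not, Bool.not_true, decide_eq_false_iff_not] at hE
    exact lam.dir_adj _ _ ((hc i).resolve_left hE)
  · simp
  · intro i j hij hi hj heq
    simp only [Bool.not_eq_eq_eq_not, Bool.not_true, decide_eq_false_iff_not] at hi hj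
    have hdi := (hc i).resolve_left hi
    have hdj := (hc j).resolve_left hj
    rcases Sym2.eq_iff.mp heq with ⟨h, -⟩ | ⟨h₁, h₂⟩
    · exact hij (hinj h)
    · exact lam.antisymm _ _ hdi (h₁ ▸ h₂ ▸ hdj)

end MixedGraph

theorem steinerOrientation_stmt2_general {V : Type*} (G : MixedGraph V)
    (hG : G.MixedAcyclic) (T : Set (V × V)) (hT : ∀ p ∈ T, p.1 ≠ p.2)
    (m₀ : ℕ) (f : Fin (m₀ + 2) → V × V)
    (hf : ∀ i, f i ∈ T)
    (hcyc : ∀ i : Fin (m₀ + 2), (f i).2 = (f (i + 1)).1) :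
    ¬ G.YesInstance T := by
  rintro ⟨lam, hsat⟩
  have hpath : ∀ i, TransGen lam.arc (f i).1 (f i).2 := fun i =>
    (reflTransGen_iff_eq_or_transGen.mp (hsat _ (hf i))).resolve_left (hT _ (hf i)).symm
  obtain ⟨p, c, hinj, hc⟩ :=
    (transGen_of_cyclic_pairs f hcyc hpath).exists_injective_cycle lam.arc_irrefl
  exact hG (lam.hasMixedCycle_of_injective_cycle hinj hc)

/-- If `G` is mixed acyclic and `T` contains pairs
`(s_1,t_1), …, (s_m,t_m)` with `m ≥ 2`, `t_i = s_{i+1}` cyclically, then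
`(G, T)` is a no-instance of Steiner Orientation. (Here `m` is encoded as
`m₀ + 2` to express `m ≥ 2`.) -/
theorem steinerOrientation_stmt2 {V : Type*} [Fintype V] (G : MixedGraph V)
    (hG : G.MixedAcyclic) (T : Set (V × V)) (hT : ∀ p ∈ T, p.1 ≠ p.2)
    (m₀ : ℕ) (f : Fin (m₀ + 2) → V × V)
    (hf : ∀ i, f i ∈ T)
    (hcyc : ∀ i : Fin (m₀ + 2), (f i).2 = (f (i + 1)).1) :
    ¬ G.YesInstance T :=
  steinerOrientation_stmt2_general G hG T hT m₀ f hf hcyc
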